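/- Let ψ, θ, ε, x₁, x₂ : ℝ → ℝ be twice differentiable satisfying the constraints x₁' = ψ'·cos(θ-ε), x₂' = ψ'·sin(θ-ε), and suppose M·⟨x'', N⟩ = sign(ψ')·a·sin ε where N = (-sin θ, cos θ), a > 0, M > 0, ψ' > 0, and cos ε ≠ 0. Then -ψ''·tan ε + ψ'·(θ' - ε') = (a/M)·tan ε. -/

import Mathlib

/-! Differentiating the constraints gives `x'' = ψ'' u + ψ' (θ' - ε') u⊥` with
`u = (cos (θ - ε), sin (θ - ε))`, and against the wheel normal `N` these two directions give
`-sin ε` and `cos ε`. Rocard's law therefore reads `M (-ψ'' sin ε + ψ' (θ' - ε') cos ε) = a sin ε`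
(the sign is `1` since `ψ' > 0`), and dividing by `M cos ε` gives the claim. -/

open Real

section PlanarCurve

variable {x₁ x₂ v φ : ℝ → ℝ} {t : ℝ}

theorem deriv_deriv_of_deriv_eq_polar (hv : DifferentiableAt ℝ v t)
    (hφ : DifferentiableAt ℝ φ t) (h₁ : ∀ s, deriv x₁ s = v s * cos (φ s))
    (h₂ : ∀ s, deriv x₂ s = v s * sin (φ s)) :
    deriv (deriv x₁) t = deriv v t * cos (φ t) - v t * deriv φ t * sin (φ t) ∧
      deriv (deriv x₂) t = deriv v t * sin (φ t) + v t * deriv φ t * cos (φ t) := by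
  rw [funext h₁, funext h₂]
  exact ⟨(hv.hasDerivAt.mul hφ.hasDerivAt.cos).deriv.trans (by ring),
    (hv.hasDerivAt.mul hφ.hasDerivAt.sin).deriv.trans (by ring)⟩

theorem normal_component_deriv_deriv_of_deriv_eq_polar (hv : DifferentiableAt ℝ v t)
    (hφ : DifferentiableAt ℝ φ t) (h₁ : ∀ s, deriv x₁ s = v s * cos (φ s))
    (h₂ : ∀ s, deriv x₂ s = v s * sin (φ s)) (α : ℝ) :
    deriv (deriv x₁) t * (-sin α) + deriv (deriv x₂) t * cos α =
      deriv v t * sin (φ t - α) + v t * deriv φ t * cos (φ t - α) := by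
  obtain ⟨e₁, e₂⟩ := deriv_deriv_of_deriv_eq_polar hv hφ h₁ h₂
  rw [e₁, e₂, sin_sub, cos_sub]
  ring

end PlanarCurve

theorem stmt6_general (M a : ℝ) (hM : 0 < M) (ψ θ ε x₁ x₂ : ℝ → ℝ)
    (hψ : ContDiff ℝ 2 ψ) (hθ : ContDiff ℝ 2 θ) (hε : ContDiff ℝ 2 ε)
    (h₁ : ∀ t, deriv x₁ t = deriv ψ t * Real.cos (θ t - ε t))
    (h₂ : ∀ t, deriv x₂ t = deriv ψ t * Real.sin (θ t - ε t))
    (hψ' : ∀ t, 0 < deriv ψ t)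
    (hcos : ∀ t, Real.cos (ε t) ≠ 0)
    (hRocard : ∀ t, M * (deriv (deriv x₁) t * (-Real.sin (θ t)) +
        deriv (deriv x₂) t * Real.cos (θ t)) =
      Real.sign (deriv ψ t) * a * Real.sin (ε t)) :
    ∀ t, -(deriv (deriv ψ) t) * Real.tan (ε t) + deriv ψ t * (deriv θ t - deriv ε t) =
      (a / M) * Real.tan (ε t) := by
  intro t
  have hφ : HasDerivAt (fun s => θ s - ε s) (deriv θ t - deriv ε t) t :=
    (hθ.differentiable two_ne_zero t).hasDerivAt.sub (hε.differentiable two_ne_zero t).hasDerivAt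
  have hN := normal_component_deriv_deriv_of_deriv_eq_polar
    (hψ.differentiable_deriv_two t) hφ.differentiableAt h₁ h₂ (θ t)
  have key : M * (-deriv (deriv ψ) t * sin (ε t) +
      deriv ψ t * (deriv θ t - deriv ε t) * cos (ε t)) = a * sin (ε t) := by
    have hR := hRocard t
    rw [hN, hφ.deriv, sub_sub_cancel_left, sin_neg, cos_neg,
      Real.sign_of_pos (hψ' t), one_mul] at hR
    linear_combination hR
  have hc := hcos t
  rw [tan_eq_sin_div_cos]
  field_simp
  linear_combination key

/-- Rocard's force law together with the kinematic constraints yields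
the second-order constraint -ψ''·tan ε + ψ'·(θ' - ε') = (a/M)·tan ε. -/
theorem stmt6 (M a : ℝ) (hM : 0 < M) (ha : 0 < a) (ψ θ ε x₁ x₂ : ℝ → ℝ)
    (hψ : ContDiff ℝ 2 ψ) (hθ : ContDiff ℝ 2 θ) (hε : ContDiff ℝ 2 ε)
    (hx₁ : ContDiff ℝ 2 x₁) (hx₂ : ContDiff ℝ 2 x₂)
    (h₁ : ∀ t, deriv x₁ t = deriv ψ t * Real.cos (θ t - ε t))
    (h₂ : ∀ t, deriv x₂ t = deriv ψ t * Real.sin (θ t - ε t))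
    (hψ' : ∀ t, 0 < deriv ψ t)
    (hcos : ∀ t, Real.cos (ε t) ≠ 0)
    (hRocard : ∀ t, M * (deriv (deriv x₁) t * (-Real.sin (θ t)) +
        deriv (deriv x₂) t * Real.cos (θ t)) =
      Real.sign (deriv ψ t) * a * Real.sin (ε t)) :
    ∀ t, -(deriv (deriv ψ) t) * Real.tan (ε t) + deriv ψ t * (deriv θ t - deriv ε t) =
      (a / M) * Real.tan (ε t) :=
  stmt6_general M a hM ψ θ ε x₁ x₂ hψ hθ hε h₁ h₂ hψ' hcos hRocard
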